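/- ALU concept satisfiability is in NP in the following semantic sense: an ALU concept C in negation normal form is satisfiable if and only if it is satisfiable in an interpretation whose domain has size at most |C| (the number of symbols of C). -/
import Mathlib


/-- ALC concepts over atomic concepts `A` and roles `R`. -/
inductive ALC (A R : Type) : Type
  | atom  : A → ALC A R
  | top   : ALC A R
  | bot   : ALC A R
  | neg   : ALC A R → ALC A R
  | inter : ALC A R → ALC A R → ALC A R
  | union : ALC A R → ALC A R → ALC A R
  | ex    : R → ALC A R → ALC A R
  | all   : R → ALC A R → ALC A R

/-- An interpretation with domain `D`. -/
structure Intp (A R D : Type) where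
  catom : A → Set D
  role  : R → Set (D × D)

/-- The extension `C^I` of an ALC concept. -/
def ALC.ext {A R D : Type} (I : Intp A R D) : ALC A R → Set D
  | .atom a => I.catom a
  | .top => Set.univ
  | .bot => ∅
  | .neg C => (C.ext I)ᶜ
  | .inter C D' => C.ext I ∩ D'.ext I
  | .union C D' => C.ext I ∪ D'.ext I
  | .ex r C => {x | ∃ y ∈ C.ext I, (x, y) ∈ I.role r}
  | .all r C => {x | ∀ y, (x, y) ∈ I.role r → y ∈ C.ext I}

/-- ALU concepts in negation normal form: negation only on atoms, and existential
quantification only in the limited form ∃R.⊤. -/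
def isALU {A R : Type} : ALC A R → Prop
  | .atom _ => True
  | .top => True
  | .bot => True
  | .neg C => match C with | .atom _ => True | _ => False
  | .inter C D' => isALU C ∧ isALU D'
  | .union C D' => isALU C ∧ isALU D'
  | .ex _ C => C = ALC.top
  | .all _ C => isALU C

/-- The size of a concept: the number of subconcept occurrences. -/
def csize {A R : Type} : ALC A R → ℕ
  | .atom _ => 1
  | .top => 1
  | .bot => 1
  | .neg C => csize C + 1
  | .inter C D' => csize C + csize D' + 1
  | .union C D' => csize C + csize D' + 1
  | .ex _ C => csize C + 1
  | .all _ C => csize C + 1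

open Classical

section Aux
variable {A R Δ : Type}

noncomputable def suc (I : Intp A R Δ) (x : Δ) (r : R) : Δ :=
  if h : ∃ y, (x, y) ∈ I.role r then h.choose else x

lemma suc_mem {I : Intp A R Δ} {x : Δ} {r : R} (h : ∃ y, (x, y) ∈ I.role r) :
    (x, suc I x r) ∈ I.role r := by
  rw [suc, dif_pos h]; exact h.choose_spec

noncomputable def addrF (I : Intp A R Δ) : ALC A R → Δ → Finset (List R)
  | .atom _, _ => ∅
  | .top, _ => ∅
  | .bot, _ => ∅
  | .neg _, _ => ∅
  | .inter C D', x => addrF I C x ∪ addrF I D' x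
  | .union C D', x => if x ∈ C.ext I then addrF I C x else addrF I D' x
  | .ex r _, _ => {[r]}
  | .all s C, x =>
      if ∃ y, (x, y) ∈ I.role s then (addrF I C (suc I x s)).image (s :: ·) else ∅

lemma one_le_csize (E : ALC A R) : 1 ≤ csize E := by
  cases E <;> simp [csize]

lemma card_addrF (I : Intp A R Δ) (E : ALC A R) (x : Δ) :
    (addrF I E x).card + 1 ≤ csize E := by
  induction E generalizing x with
  | atom a => simp [addrF, csize]
  | top => simp [addrF, csize]
  | bot => simp [addrF, csize]
  | neg C ih => simp [addrF, csize]
  | inter C D' ih1 ih2 =>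
      have := Finset.card_union_le (addrF I C x) (addrF I D' x)
      have h1 := ih1 x; have h2 := ih2 x
      simp only [addrF, csize]; omega
  | union C D' ih1 ih2 =>
      simp only [addrF, csize]
      by_cases h : x ∈ C.ext I
      · rw [if_pos h]; have := ih1 x; have := one_le_csize D'; omega
      · rw [if_neg h]; have := ih2 x; have := one_le_csize C; omega
  | ex r C ih => simp [addrF, csize]; exact one_le_csize C
  | all s C ih =>
      simp only [addrF, csize]
      by_cases h : ∃ y, (x, y) ∈ I.role s
      · rw [if_pos h]
        have := Finset.card_image_le (f := (s :: ·)) (s := addrF I C (suc I x s))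
        have := ih (suc I x s); omega
      · rw [if_neg h]; have := one_le_csize C; simp only [Finset.card_empty]; omega

noncomputable def gFromL (I : Intp A R Δ) : List R → Δ → Δ
  | [], x => x
  | s :: w, x => gFromL I w (suc I x s)

noncomputable def gFrom (I : Intp A R Δ) (x : Δ) (w : List R) : Δ := gFromL I w x

@[simp] lemma gFrom_nil (I : Intp A R Δ) (x : Δ) : gFrom I x [] = x := rfl
@[simp] lemma gFrom_cons (I : Intp A R Δ) (x : Δ) (s : R) (w : List R) :
    gFrom I x (s :: w) = gFrom I (suc I x s) w := rfl

def validL (I : Intp A R Δ) : List R → Δ → Prop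
  | [], _ => True
  | s :: w, x => (∃ y, (x, y) ∈ I.role s) ∧ validL I w (suc I x s)

def valid (I : Intp A R Δ) (x : Δ) (w : List R) : Prop := validL I w x

@[simp] lemma valid_nil (I : Intp A R Δ) (x : Δ) : valid I x [] := trivial
lemma valid_cons (I : Intp A R Δ) (x : Δ) (s : R) (w : List R) :
    valid I x (s :: w) ↔ (∃ y, (x, y) ∈ I.role s) ∧ valid I (suc I x s) w := Iff.rfl

lemma gFrom_append (I : Intp A R Δ) (x : Δ) (u v : List R) :
    gFrom I x (u ++ v) = gFrom I (gFrom I x u) v := by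
  induction u generalizing x with
  | nil => rfl
  | cons s u ih => simp [ih]

lemma valid_append (I : Intp A R Δ) (x : Δ) (u v : List R)
    (h : valid I x (u ++ v)) : valid I (gFrom I x u) v := by
  induction u generalizing x with
  | nil => exact h
  | cons s u ih => exact ih (suc I x s) h.2

lemma valid_addrF (I : Intp A R Δ) (E : ALC A R) (hE : isALU E) (x : Δ)
    (hx : x ∈ E.ext I) : ∀ u ∈ addrF I E x, valid I x u := by
  induction E generalizing x with
  | atom a => simp [addrF]
  | top => simp [addrF]
  | bot => simp [addrF]
  | neg C ih => simp [addrF]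
  | inter C D' ih1 ih2 =>
      intro u hu
      rcases Finset.mem_union.1 hu with h | h
      · exact ih1 hE.1 x hx.1 u h
      · exact ih2 hE.2 x hx.2 u h
  | union C D' ih1 ih2 =>
      intro u hu
      by_cases h : x ∈ C.ext I
      · rw [addrF, if_pos h] at hu; exact ih1 hE.1 x h u hu
      · rw [addrF, if_neg h] at hu
        rcases hx with h' | h'
        · exact absurd h' h
        · exact ih2 hE.2 x h' u hu
  | ex r C ih =>
      intro u hu
      simp only [addrF, Finset.mem_singleton] at hu
      subst hu
      rcases hx with ⟨y, _, hy⟩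
      exact ⟨⟨y, hy⟩, trivial⟩
  | all s C ih =>
      intro u hu
      by_cases h : ∃ y, (x, y) ∈ I.role s
      · rw [addrF, if_pos h] at hu
        rcases Finset.mem_image.1 hu with ⟨v, hv, rfl⟩
        exact ⟨h, ih hE (suc I x s) (hx _ (suc_mem h)) v hv⟩
      · rw [addrF, if_neg h] at hu; simp at hu

noncomputable def smallIntp (I : Intp A R Δ) (x₀ : Δ) (P : Finset (List R)) :
    Intp A R {w // w ∈ P} :=
  ⟨fun a => {w | gFrom I x₀ ↑w ∈ I.catom a},
   fun r => {p | (↑p.2 : List R) = ↑p.1 ++ [r]}⟩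

lemma sound (I : Intp A R Δ) (x₀ : Δ) (P : Finset (List R))
    (hval : ∀ w ∈ P, valid I x₀ w)
    (E : ALC A R) (hE : isALU E) :
    ∀ (w : List R) (hw : w ∈ P),
      gFrom I x₀ w ∈ E.ext I →
      (∀ u ∈ addrF I E (gFrom I x₀ w), w ++ u ∈ P) →
      (⟨w, hw⟩ : {w // w ∈ P}) ∈ E.ext (smallIntp I x₀ P) := by
  induction E with
  | atom a => intro w hw hx _; exact hx
  | top => intro w hw hx _; trivial
  | bot => intro w hw hx _; exact absurd hx (Set.notMem_empty _)
  | neg C ih =>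
      intro w hw hx _
      cases C with
      | atom a => exact hx
      | top => exact absurd hE (by simp [isALU])
      | bot => exact absurd hE (by simp [isALU])
      | neg _ => exact absurd hE (by simp [isALU])
      | inter _ _ => exact absurd hE (by simp [isALU])
      | union _ _ => exact absurd hE (by simp [isALU])
      | ex _ _ => exact absurd hE (by simp [isALU])
      | all _ _ => exact absurd hE (by simp [isALU])
  | inter C D' ih1 ih2 =>
      intro w hw hx hsub
      exact ⟨ih1 hE.1 w hw hx.1 (fun u hu => hsub u (Finset.mem_union_left _ hu)),
             ih2 hE.2 w hw hx.2 (fun u hu => hsub u (Finset.mem_union_right _ hu))⟩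
  | union C D' ih1 ih2 =>
      intro w hw hx hsub
      by_cases h : gFrom I x₀ w ∈ C.ext I
      · exact Or.inl (ih1 hE.1 w hw h (fun u hu => hsub u (by rwa [addrF, if_pos h])))
      · rcases hx with h' | h'
        · exact absurd h' h
        · exact Or.inr (ih2 hE.2 w hw h' (fun u hu => hsub u (by rwa [addrF, if_neg h])))
  | ex r C ih =>
      intro w hw hx hsub
      have hE' : C = ALC.top := hE
      subst hE'
      have hmem : w ++ [r] ∈ P := hsub [r] (by simp [addrF])
      exact ⟨⟨w ++ [r], hmem⟩, trivial, rfl⟩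
  | all s C ih =>
      intro w hw hx hsub
      rintro ⟨w', hw'⟩ hrole
      have hweq : w' = w ++ [s] := hrole
      subst hweq
      have hv : valid I (gFrom I x₀ w) [s] := valid_append I x₀ w [s] (hval _ hw')
      have hs : ∃ y, (gFrom I x₀ w, y) ∈ I.role s := hv.1
      have hx' : gFrom I x₀ (w ++ [s]) ∈ C.ext I := by
        rw [gFrom_append]
        exact hx _ (suc_mem hs)
      refine ih hE (w ++ [s]) hw' hx' ?_
      intro u hu
      have : w ++ (s :: u) ∈ P := by
        refine hsub (s :: u) ?_
        rw [addrF, if_pos hs]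
        refine Finset.mem_image.2 ⟨u, ?_, rfl⟩
        rwa [gFrom_append] at hu
      simpa using this

end Aux

/-- An ALU concept in NNF is satisfiable iff it is satisfiable in an interpretation
whose domain has at most |C| elements. -/
theorem alu_small_model {A R : Type} (C : ALC A R) (hC : isALU C) :
    (∃ (D : Type) (_ : Nonempty D) (I : Intp A R D), C.ext I ≠ ∅) ↔
    (∃ (D : Type) (_ : Nonempty D) (_ : Fintype D) (I : Intp A R D),
      Fintype.card D ≤ csize C ∧ C.ext I ≠ ∅) := by
  constructor
  · rintro ⟨Δ, hΔ, I, hne⟩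
    rcases Set.nonempty_iff_ne_empty.2 hne with ⟨x₀, hx₀⟩
    set P : Finset (List R) := insert [] (addrF I C x₀) with hP
    have hnilP : ([] : List R) ∈ P := Finset.mem_insert_self _ _
    have hval : ∀ w ∈ P, valid I x₀ w := by
      intro w hw
      rcases Finset.mem_insert.1 hw with rfl | h
      · trivial
      · exact valid_addrF I C hC x₀ hx₀ w h
    refine ⟨{w // w ∈ P}, ⟨⟨[], hnilP⟩⟩, inferInstance, smallIntp I x₀ P, ?_, ?_⟩
    · have h1 : Fintype.card {w // w ∈ P} = P.card := Fintype.card_coe P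
      have h2 : P.card ≤ (addrF I C x₀).card + 1 := Finset.card_insert_le _ _
      have h3 := card_addrF I C x₀
      omega
    · intro hemp
      have : (⟨[], hnilP⟩ : {w // w ∈ P}) ∈ C.ext (smallIntp I x₀ P) := by
        refine sound I x₀ P hval C hC [] hnilP hx₀ ?_
        intro u hu
        exact Finset.mem_insert_of_mem (by simpa using hu)
      rw [hemp] at this
      exact this
  · rintro ⟨D, hD, _, I, _, hne⟩
    exact ⟨D, hD, I, hne⟩
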